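/- For E > 0 define T(E) = 2∫_{−√(2E)}^{√(2E)} (E + 1 − x²/2) / √((E + 1 − x²/2)² − 1) dx. Then T is monotonically increasing on (0, +∞): for all E₁, E₂ with 0 < E₁ ≤ E₂ one has T(E₁) ≤ T(E₂). -/

import Mathlib

/-!
Substituting `x = √(2E) s` turns `Trel E` into `2√2 ∫_{-1}^{1} φ(E(1 - s²)) / √(1 - s²) ds`
with `φ(w) = (1 + w) / √(2 + w)`. Since `φ` is increasing on `[-1, ∞)`, the new integrand
increases pointwise with `E`; it is integrable because it is a continuous function times the
arcsine density `1 / √(1 - s²)`.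
-/

/-- The period function of the normalized relativistic harmonic oscillator. -/
noncomputable def Trel (E : ℝ) : ℝ :=
  2 * ∫ x in (-Real.sqrt (2 * E))..(Real.sqrt (2 * E)),
        (E + 1 - x ^ 2 / 2) / Real.sqrt ((E + 1 - x ^ 2 / 2) ^ 2 - 1)

open Real Set intervalIntegral
open MeasureTheory (volume)

noncomputable def periodWeight (w : ℝ) : ℝ := (1 + w) / √(2 + w)

lemma periodWeight_monotoneOn : MonotoneOn periodWeight (Ici (-1)) := by
  intro a ha b hb hab
  rw [mem_Ici] at ha hb
  unfold periodWeight
  rw [div_le_div_iff₀ (sqrt_pos.2 (by linarith)) (sqrt_pos.2 (by linarith)),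
    ← pow_le_pow_iff_left₀ (mul_nonneg (by linarith) (sqrt_nonneg _))
      (mul_nonneg (by linarith) (sqrt_nonneg _)) two_ne_zero, mul_pow, mul_pow,
    sq_sqrt (by linarith), sq_sqrt (by linarith)]
  -- with u = 1 + a, v = 1 + b the difference of the two sides is (v - u)(u + v + uv)
  nlinarith [mul_nonneg (sub_nonneg.2 hab) (mul_nonneg (neg_le_iff_add_nonneg'.1 ha)
    (neg_le_iff_add_nonneg'.1 hb))]

lemma continuousOn_periodWeight_comp {E : ℝ} (hE : 0 ≤ E) :
    ContinuousOn (fun s => periodWeight (E * (1 - s ^ 2))) (uIcc (-1) 1) := by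
  intro s hs
  rw [uIcc_of_le (by norm_num), mem_Icc] at hs
  have : 0 ≤ E * (1 - s ^ 2) := mul_nonneg hE (by nlinarith)
  unfold periodWeight
  exact (ContinuousAt.div (by fun_prop) (by fun_prop) (by positivity)).continuousWithinAt

lemma intervalIntegrable_periodWeight {E : ℝ} (hE : 0 ≤ E) :
    IntervalIntegrable (fun s => periodWeight (E * (1 - s ^ 2)) / √(1 - s ^ 2))
      volume (-1) 1 := by
  simpa only [div_eq_mul_inv, sqrt_inv] using
    Polynomial.Chebyshev.intervalIntegrable_sqrt_one_sub_sq_inv.continuousOn_mul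
      (continuousOn_periodWeight_comp hE)

lemma sqrt_mul_Trel_integrand_comp_mul {E s : ℝ} (hE : 0 < E) (hs : s ^ 2 ≤ 1) :
    √(2 * E) * ((E + 1 - (√(2 * E) * s) ^ 2 / 2) /
      √((E + 1 - (√(2 * E) * s) ^ 2 / 2) ^ 2 - 1)) =
    √2 * (periodWeight (E * (1 - s ^ 2)) / √(1 - s ^ 2)) := by
  set w := E * (1 - s ^ 2)
  have hw : 0 ≤ w := mul_nonneg hE.le (by linarith)
  have hx : E + 1 - (√(2 * E) * s) ^ 2 / 2 = 1 + w := by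
    rw [mul_pow, sq_sqrt (by positivity)]; ring
  have hroot : √((1 + w) ^ 2 - 1) = √E * (√(1 - s ^ 2) * √(2 + w)) := by
    rw [show (1 + w) ^ 2 - 1 = E * ((1 - s ^ 2) * (2 + w)) by ring,
      sqrt_mul hE.le, sqrt_mul (by linarith)]
  rw [hx, hroot, sqrt_mul zero_le_two, mul_assoc, ← mul_div_assoc,
    mul_div_mul_left _ _ (sqrt_pos.2 hE).ne', periodWeight, div_div, mul_comm √(2 + w)]

lemma Trel_eq_integral {E : ℝ} (hE : 0 < E) :
    Trel E =
      2 * √2 * ∫ s in (-1 : ℝ)..1, periodWeight (E * (1 - s ^ 2)) / √(1 - s ^ 2) := by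
  have hsubst := smul_integral_comp_mul_left
    (fun x : ℝ => (E + 1 - x ^ 2 / 2) / √((E + 1 - x ^ 2 / 2) ^ 2 - 1))
    (a := -1) (b := 1) √(2 * E)
  rw [mul_neg_one, mul_one] at hsubst
  have hpointwise : EqOn
      (fun s => √(2 * E) * ((E + 1 - (√(2 * E) * s) ^ 2 / 2) /
        √((E + 1 - (√(2 * E) * s) ^ 2 / 2) ^ 2 - 1)))
      (fun s => √2 * (periodWeight (E * (1 - s ^ 2)) / √(1 - s ^ 2))) (uIcc (-1) 1) := by
    intro s hs
    rw [uIcc_of_le (by norm_num), mem_Icc] at hs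
    exact sqrt_mul_Trel_integrand_comp_mul hE (by nlinarith)
  rw [Trel, ← hsubst, smul_eq_mul, ← integral_const_mul, integral_congr hpointwise,
    integral_const_mul, mul_assoc]

theorem stmt14 : ∀ E₁ E₂ : ℝ, 0 < E₁ → E₁ ≤ E₂ → Trel E₁ ≤ Trel E₂ := by
  intro E₁ E₂ hE₁ hE₁₂
  have hE₂ : 0 < E₂ := hE₁.trans_le hE₁₂
  rw [Trel_eq_integral hE₁, Trel_eq_integral hE₂]
  gcongr 2 * √2 * ?_
  refine integral_mono_on (by norm_num) (intervalIntegrable_periodWeight hE₁.le)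
    (intervalIntegrable_periodWeight hE₂.le) fun s hs => ?_
  have hs : 0 ≤ 1 - s ^ 2 := by nlinarith [hs.1, hs.2]
  gcongr
  exact periodWeight_monotoneOn (mem_Ici.2 (by nlinarith)) (mem_Ici.2 (by nlinarith))
    (mul_le_mul_of_nonneg_right hE₁₂ hs)
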